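/- In the category of finite paths with edge-preserving co-bijective relations as morphisms, every morphism that is not an isomorphism is a finite composition of prime morphisms (morphisms ⊐ that are not isomorphisms but such that any factorization ⊐ = ⊵ ∘ ⊵' forces ⊵ or ⊵' to be an isomorphism). -/

import Mathlib

namespace PathCat

/-- The edge relation on the standard path `P_n` with vertices `Fin (n+1)`:
`i ⊓ j` iff `|i − j| ≤ 1` (reflexive and symmetric). -/
def AdjF {n : ℕ} (i j : Fin (n + 1)) : Prop := (i : ℕ) ≤ (j : ℕ) + 1 ∧ (j : ℕ) ≤ (i : ℕ) + 1

/-- Edge-preserving relation (as a subset of codomain × domain):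
`⊐ ∘ ⊓ ∘ ⊏ ⊆ ⊓`. -/
def EdgePresRel {m n : ℕ} (R : Fin (n + 1) → Fin (m + 1) → Prop) : Prop :=
  ∀ i j k l, R i k → AdjF k l → R j l → AdjF i j

/-- Co-surjective: every element of the domain is related to something. -/
def CoSurjRel {m n : ℕ} (R : Fin (n + 1) → Fin (m + 1) → Prop) : Prop := ∀ k, ∃ i, R i k

/-- Co-injective: every element of the codomain is the sole image of some element. -/
def CoInjRel {m n : ℕ} (R : Fin (n + 1) → Fin (m + 1) → Prop) : Prop :=
  ∀ i, ∃ k, ∀ i', R i' k ↔ i' = i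

/-- A morphism of the path category `P`: an edge-preserving co-bijective relation
from `P_m` to `P_n` (subset of `P_n × P_m`). -/
def IsMorRel {m n : ℕ} (R : Fin (n + 1) → Fin (m + 1) → Prop) : Prop :=
  EdgePresRel R ∧ CoSurjRel R ∧ CoInjRel R

/-- Relational composition. -/
def compRel {m n l : ℕ} (S : Fin (l + 1) → Fin (n + 1) → Prop)
    (R : Fin (n + 1) → Fin (m + 1) → Prop) : Fin (l + 1) → Fin (m + 1) → Prop :=
  fun a c => ∃ b, S a b ∧ R b c

/-- Isomorphism in the path category. -/
def IsIsoRel {m n : ℕ} (R : Fin (n + 1) → Fin (m + 1) → Prop) : Prop :=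
  IsMorRel R ∧ ∃ S : Fin (m + 1) → Fin (n + 1) → Prop, IsMorRel S ∧
    (∀ a c, compRel R S a c ↔ a = c) ∧ (∀ a c, compRel S R a c ↔ a = c)

/-- Prime morphism: not an isomorphism, but any factorization into two morphisms
forces one factor to be an isomorphism. -/
def IsPrimeRel {m n : ℕ} (R : Fin (n + 1) → Fin (m + 1) → Prop) : Prop :=
  IsMorRel R ∧ ¬ IsIsoRel R ∧
    ∀ (k : ℕ) (S : Fin (n + 1) → Fin (k + 1) → Prop) (T : Fin (k + 1) → Fin (m + 1) → Prop),
      IsMorRel S → IsMorRel T → (∀ a c, R a c ↔ compRel S T a c) → IsIsoRel S ∨ IsIsoRel T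

/-- Edge-injective morphism: on every edge of the domain, the relation restricts to
an injective function with distinct singleton images. -/
def EdgeInjRel {m n : ℕ} (R : Fin (n + 1) → Fin (m + 1) → Prop) : Prop :=
  ∀ k l : Fin (m + 1), AdjF k l → k ≠ l →
    ∃ i j, i ≠ j ∧ (∀ i', R i' k ↔ i' = i) ∧ (∀ j', R j' l ↔ j' = j)

/-- Morphisms of the category `F`: edge-preserving surjective functions. -/
def IsMorF {m n : ℕ} (f : Fin (m + 1) → Fin (n + 1)) : Prop :=
  Function.Surjective f ∧ ∀ a b, AdjF a b → AdjF (f a) (f b)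

/-- Isomorphism in `F`. -/
def IsIsoF {m n : ℕ} (f : Fin (m + 1) → Fin (n + 1)) : Prop :=
  IsMorF f ∧ ∃ g : Fin (n + 1) → Fin (m + 1), IsMorF g ∧
    (∀ a, g (f a) = a) ∧ ∀ b, f (g b) = b

/-- Prime morphism in `F`. -/
def IsPrimeF {m n : ℕ} (f : Fin (m + 1) → Fin (n + 1)) : Prop :=
  IsMorF f ∧ ¬ IsIsoF f ∧
    ∀ (k : ℕ) (g : Fin (k + 1) → Fin (n + 1)) (h : Fin (m + 1) → Fin (k + 1)),
      IsMorF g → IsMorF h → (∀ a, f a = g (h a)) → IsIsoF g ∨ IsIsoF h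

/-- An edge-injective morphism of paths: an edge-preserving surjective function
mapping each edge of the domain onto an edge of the codomain. -/
def IsEdgeInjFun {m n : ℕ} (f : Fin (m + 1) → Fin (n + 1)) : Prop :=
  Function.Surjective f ∧ (∀ a b : Fin (m + 1), AdjF a b → AdjF (f a) (f b)) ∧
    ∀ a b : Fin (m + 1), (a : ℕ) + 1 = (b : ℕ) → f a ≠ f b

/-- The turning number: the number of length-two subpaths mapped onto an edge. -/
noncomputable def turningNumber {m n : ℕ} (f : Fin (m + 1) → Fin (n + 1)) : ℕ :=
  Set.ncard {b : Fin (m + 1) | ∃ a c : Fin (m + 1),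
    (a : ℕ) + 1 = (b : ℕ) ∧ (b : ℕ) + 1 = (c : ℕ) ∧ f a = f c}

/-- Proper function: no restriction to a proper subpath is still surjective. -/
def ProperFun {m n : ℕ} (f : Fin (m + 1) → Fin (n + 1)) : Prop :=
  ∀ a b : Fin (m + 1), a ≤ b → (∀ j, ∃ k, a ≤ k ∧ k ≤ b ∧ f k = j) →
    ((a : ℕ) = 0 ∧ (b : ℕ) = m)

/-- Composite of a chain of morphisms `F i : P_{d i} → P_{d (i+1)}`. -/
def chainComp (d : ℕ → ℕ) (F : ∀ i : ℕ, Fin (d (i + 1) + 1) → Fin (d i + 1) → Prop) :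
    ∀ k : ℕ, Fin (d k + 1) → Fin (d 0 + 1) → Prop
  | 0 => fun a c => a = c
  | k + 1 => fun a c => ∃ b, F k a b ∧ chainComp d F k b c

end PathCat

/-!
A morphism `P_m → P_n` forces `n ≤ m`, since co-injectivity picks for each vertex of `P_n`
a vertex of `P_m` related to it alone. When `m = n` these choices exhaust `P_m`, so the
morphism is the graph of a surjective edge-preserving self-map of the path. Such a map is
`1`-Lipschitz and must send the two ends to the two ends, so it is the identity or the
reversal; either way it is an involution and its graph is an isomorphism. Hence every
non-isomorphism strictly shortens the path. A non-isomorphism that is not prime splits into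
two non-isomorphisms, each with a smaller length gap, and induction on the gap writes it as
a composite of primes, which is then laid out as a chain.
-/

namespace PathCat

section Morphisms

variable {m n : ℕ}

theorem adjF_iff_dist (i j : Fin (n + 1)) : AdjF i j ↔ Nat.dist i j ≤ 1 := by
  simp only [AdjF, Nat.dist]
  omega

theorem dist_le_dist_of_adjF {f : Fin (m + 1) → Fin (n + 1)}
    (hf : ∀ a b, AdjF a b → AdjF (f a) (f b)) (a b : Fin (m + 1)) :
    Nat.dist (f a) (f b) ≤ Nat.dist a b := by
  wlog hab : a ≤ b generalizing a b
  · rw [Nat.dist_comm, Nat.dist_comm (a : ℕ)]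
    exact this b a (le_of_not_ge hab)
  obtain ⟨t, ht⟩ : ∃ t, (b : ℕ) = a + t := ⟨b - a, by omega⟩
  induction t generalizing b with
  | zero =>
    obtain rfl : a = b := Fin.ext ht.symm
    simp
  | succ t ih =>
    let b' : Fin (m + 1) := ⟨a + t, by omega⟩
    have hb'b : Nat.dist (f b') (f b) ≤ 1 :=
      (adjF_iff_dist _ _).mp (hf b' b ((adjF_iff_dist _ _).mpr (by simp [b', Nat.dist]; omega)))
    calc Nat.dist (f a) (f b) ≤ Nat.dist (f a) (f b') + Nat.dist (f b') (f b) :=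
          Nat.dist.triangle_inequality _ _ _
      _ ≤ Nat.dist a b' + 1 := by grw [ih b' (Fin.le_def.mpr (by simp [b'])) rfl, hb'b]
      _ = Nat.dist a b := by simp only [b', Nat.dist]; omega

theorem IsMorF.eq_id_or_eq_rev {f : Fin (n + 1) → Fin (n + 1)} (hf : IsMorF f) :
    (∀ x, f x = x) ∨ (∀ x, f x = x.rev) := by
  obtain ⟨a, ha⟩ := hf.1 0
  obtain ⟨b, hb⟩ := hf.1 (Fin.last n)
  have hdist := dist_le_dist_of_adjF hf.2
  have hab := hdist a b
  have hxa := fun x => hdist x a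
  have hxb := fun x => hdist x b
  simp only [ha, hb, Nat.dist, Fin.val_zero, Fin.val_last] at hab hxa hxb
  have hends : ((a : ℕ) = 0 ∧ (b : ℕ) = n) ∨ ((a : ℕ) = n ∧ (b : ℕ) = 0) := by omega
  rcases hends with hends | hends
  · refine .inl fun x => Fin.ext ?_
    have := hxa x; have := hxb x; have := (f x).isLt
    omega
  · refine .inr fun x => Fin.ext ?_
    have := hxa x; have := hxb x; have := (f x).isLt
    simp only [Fin.val_rev]
    omega

theorem IsMorF.involutive {f : Fin (n + 1) → Fin (n + 1)} (hf : IsMorF f) :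
    Function.Involutive f := by
  rcases hf.eq_id_or_eq_rev with h | h <;> intro x
  · rw [h, h]
  · rw [h, h, Fin.rev_rev]

theorem isMorRel_graph_iff {f : Fin (m + 1) → Fin (n + 1)} :
    IsMorRel (fun a c => a = f c) ↔ IsMorF f := by
  constructor
  · rintro ⟨hedge, -, hinj⟩
    refine ⟨fun i => ?_, fun k l hkl => hedge _ _ k l rfl hkl rfl⟩
    obtain ⟨k, hk⟩ := hinj i
    exact ⟨k, (hk (f k)).mp rfl⟩
  · rintro ⟨hsurj, hadj⟩
    refine ⟨?_, fun k => ⟨f k, rfl⟩, fun i => ?_⟩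
    · rintro _ _ k l rfl hkl rfl
      exact hadj k l hkl
    · obtain ⟨k, rfl⟩ := hsurj i
      exact ⟨k, fun _ => Iff.rfl⟩

theorem isIsoRel_graph {f : Fin (n + 1) → Fin (n + 1)} (hf : IsMorF f) :
    IsIsoRel (fun a c => a = f c) := by
  have hmor := isMorRel_graph_iff.mpr hf
  have hcomp : ∀ a c, compRel (fun a c => a = f c) (fun a c => a = f c) a c ↔ a = c := by
    intro a c
    simp only [compRel, exists_eq_right, hf.involutive c]
  exact ⟨hmor, _, hmor, hcomp, hcomp⟩

theorem CoInjRel.exists_injective {R : Fin (n + 1) → Fin (m + 1) → Prop} (hR : CoInjRel R) :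
    ∃ s : Fin (n + 1) → Fin (m + 1), Function.Injective s ∧ ∀ i i', R i' (s i) ↔ i' = i := by
  choose s hs using hR
  refine ⟨s, fun i i' h => ?_, hs⟩
  have : R i (s i') := h ▸ (hs i i).mpr rfl
  exact (hs i' i).mp this

theorem IsMorRel.le {R : Fin (n + 1) → Fin (m + 1) → Prop} (hR : IsMorRel R) : n ≤ m := by
  obtain ⟨s, hs, -⟩ := hR.2.2.exists_injective
  simpa using Fintype.card_le_of_injective s hs

theorem IsMorRel.eq_graph {R : Fin (n + 1) → Fin (n + 1) → Prop} (hR : IsMorRel R) :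
    ∃ f : Fin (n + 1) → Fin (n + 1), R = fun a c => a = f c := by
  obtain ⟨s, hinj, hs⟩ := hR.2.2.exists_injective
  let e := Equiv.ofBijective s hinj.bijective_of_finite
  refine ⟨e.symm, funext₂ fun a c => propext ?_⟩
  have hc : s (e.symm c) = c := e.apply_symm_apply c
  rw [← hs (e.symm c) a, hc]

theorem IsMorRel.isIsoRel {R : Fin (n + 1) → Fin (n + 1) → Prop} (hR : IsMorRel R) :
    IsIsoRel R := by
  obtain ⟨f, rfl⟩ := hR.eq_graph
  exact isIsoRel_graph (isMorRel_graph_iff.mp hR)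

theorem IsMorRel.lt_of_not_isIsoRel {R : Fin (n + 1) → Fin (m + 1) → Prop} (hR : IsMorRel R)
    (hni : ¬ IsIsoRel R) : n < m := by
  refine lt_of_le_of_ne hR.le fun hnm => ?_
  subst hnm
  exact hni hR.isIsoRel

end Morphisms

section Chains

theorem compRel_assoc {m k l n : ℕ} (S : Fin (n + 1) → Fin (l + 1) → Prop)
    (T : Fin (l + 1) → Fin (k + 1) → Prop) (U : Fin (k + 1) → Fin (m + 1) → Prop) :
    compRel S (compRel T U) = compRel (compRel S T) U := by
  ext a c
  simp only [compRel]
  exact ⟨fun ⟨b, hab, e, hbe, hec⟩ => ⟨e, ⟨b, hab, hbe⟩, hec⟩,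
    fun ⟨e, ⟨b, hab, hbe⟩, hec⟩ => ⟨b, hab, e, hbe, hec⟩⟩

inductive IsPrimeComposite : {m n : ℕ} → (Fin (n + 1) → Fin (m + 1) → Prop) → Prop
  | prime {m n : ℕ} {R : Fin (n + 1) → Fin (m + 1) → Prop} : IsPrimeRel R → IsPrimeComposite R
  | comp_prime {m k n : ℕ} {S : Fin (n + 1) → Fin (k + 1) → Prop}
      {T : Fin (k + 1) → Fin (m + 1) → Prop} :
      IsPrimeComposite S → IsPrimeRel T → IsPrimeComposite (compRel S T)

theorem IsPrimeComposite.comp {m k n : ℕ} {S : Fin (n + 1) → Fin (k + 1) → Prop}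
    {T : Fin (k + 1) → Fin (m + 1) → Prop} (hS : IsPrimeComposite S)
    (hT : IsPrimeComposite T) : IsPrimeComposite (compRel S T) := by
  induction hT generalizing n with
  | prime hT => exact .comp_prime hS hT
  | comp_prime _ hP ih =>
    rw [compRel_assoc]
    exact .comp_prime (ih hS) hP

theorem isPrimeComposite_of_not_isIsoRel {m n : ℕ} {R : Fin (n + 1) → Fin (m + 1) → Prop}
    (hR : IsMorRel R) (hni : ¬ IsIsoRel R) : IsPrimeComposite R := by
  by_cases hprime : IsPrimeRel R
  · exact .prime hprime
  simp only [IsPrimeRel, hR, hni, not_false_eq_true, true_and, not_forall, not_or] at hprime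
  obtain ⟨k, S, T, hS, hT, hRST, hSni, hTni⟩ := hprime
  -- `n < k < m`, so both recursive calls below shrink the gap `m - n`
  have hnk := hS.lt_of_not_isIsoRel hSni
  have hkm := hT.lt_of_not_isIsoRel hTni
  obtain rfl : R = compRel S T := funext₂ fun a c => propext (hRST a c)
  exact (isPrimeComposite_of_not_isIsoRel hS hSni).comp (isPrimeComposite_of_not_isIsoRel hT hTni)
termination_by m - n

-- Prepending a first factor shifts the indices of a chain by one; with the shift built into the
-- recursion, the new factors have the right types definitionally and no transport is needed.
def consLen (m : ℕ) (d : ℕ → ℕ) : ℕ → ℕ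
  | 0 => m
  | i + 1 => d i

def consChain {m : ℕ} {d : ℕ → ℕ} (T : Fin (d 0 + 1) → Fin (m + 1) → Prop)
    (F : ∀ i : ℕ, Fin (d (i + 1) + 1) → Fin (d i + 1) → Prop) :
    ∀ i : ℕ, Fin (consLen m d (i + 1) + 1) → Fin (consLen m d i + 1) → Prop
  | 0 => T
  | i + 1 => F i

theorem chainComp_succ (d : ℕ → ℕ) (F : ∀ i : ℕ, Fin (d (i + 1) + 1) → Fin (d i + 1) → Prop)
    (k : ℕ) : chainComp d F (k + 1) = compRel (F k) (chainComp d F k) :=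
  rfl

theorem chainComp_consChain {m : ℕ} {d : ℕ → ℕ} (T : Fin (d 0 + 1) → Fin (m + 1) → Prop)
    (F : ∀ i : ℕ, Fin (d (i + 1) + 1) → Fin (d i + 1) → Prop) (j : ℕ) :
    chainComp (consLen m d) (consChain T F) (j + 1) = compRel (chainComp d F j) T := by
  induction j with
  | zero =>
    ext a c
    exact ⟨fun ⟨b, hab, hbc⟩ => ⟨a, rfl, hbc ▸ hab⟩, fun ⟨b, hab, hbc⟩ => ⟨c, hab ▸ hbc, rfl⟩⟩
  | succ j ih =>
    rw [chainComp_succ, ih]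
    exact compRel_assoc (F j) (chainComp d F j) T

def IsPrimeChain {m n : ℕ} (R : Fin (n + 1) → Fin (m + 1) → Prop) : Prop :=
  ∃ (k : ℕ) (d : ℕ → ℕ) (F : ∀ i : ℕ, Fin (d (i + 1) + 1) → Fin (d i + 1) → Prop)
    (h0 : d 0 = m) (h1 : d (k + 1) = n),
    (∀ i, i ≤ k → IsPrimeRel (F i)) ∧
    ∀ (a : Fin (n + 1)) (c : Fin (m + 1)),
      R a c ↔ chainComp d F (k + 1)
        (Fin.cast (show n + 1 = d (k + 1) + 1 by rw [h1]) a)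
        (Fin.cast (show m + 1 = d 0 + 1 by rw [h0]) c)

theorem consChain_isPrimeRel {m k : ℕ} {d : ℕ → ℕ} {T : Fin (d 0 + 1) → Fin (m + 1) → Prop}
    {F : ∀ i : ℕ, Fin (d (i + 1) + 1) → Fin (d i + 1) → Prop} (hT : IsPrimeRel T)
    (hF : ∀ i < k, IsPrimeRel (F i)) : ∀ i < k + 1, IsPrimeRel (consChain T F i)
  | 0, _ => hT
  | i + 1, hi => hF i (by omega)

theorem isPrimeChain_of_isPrimeRel {m n : ℕ} {R : Fin (n + 1) → Fin (m + 1) → Prop}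
    (hR : IsPrimeRel R) : IsPrimeChain R := by
  refine ⟨0, consLen m fun _ => n, consChain R fun _ _ _ => True, rfl, rfl,
    fun i hi => consChain_isPrimeRel hR (k := 0) (by simp) i (Nat.lt_succ_of_le hi), fun a c => ?_⟩
  rw [chainComp_consChain]
  exact ⟨fun h => ⟨a, rfl, h⟩, fun ⟨b, hab, h⟩ => by obtain rfl : a = b := hab; exact h⟩

theorem IsPrimeChain.comp_prime {m k n : ℕ} {S : Fin (n + 1) → Fin (k + 1) → Prop}
    {T : Fin (k + 1) → Fin (m + 1) → Prop} (hS : IsPrimeChain S) (hT : IsPrimeRel T) :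
    IsPrimeChain (compRel S T) := by
  obtain ⟨j, d, F, rfl, rfl, hF, hSF⟩ := hS
  obtain rfl : S = chainComp d F (j + 1) := funext₂ fun a c => propext (hSF a c)
  refine ⟨j + 1, consLen m d, consChain T F, rfl, rfl,
    fun i hi => consChain_isPrimeRel hT (k := j + 1) (fun i hi => hF i (by omega)) i
      (Nat.lt_succ_of_le hi), fun a c => ?_⟩
  exact iff_of_eq (congrFun₂ (chainComp_consChain T F (j + 1)) a c).symm

theorem IsPrimeComposite.isPrimeChain {m n : ℕ} {R : Fin (n + 1) → Fin (m + 1) → Prop}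
    (hR : IsPrimeComposite R) : IsPrimeChain R := by
  induction hR with
  | prime hR => exact isPrimeChain_of_isPrimeRel hR
  | comp_prime _ hT ih => exact ih.comp_prime hT

end Chains

end PathCat

open PathCat in
/-- Every non-isomorphism in the category of finite paths is a finite composition
of prime morphisms. -/
theorem stmt14 {m n : ℕ} (R : Fin (n + 1) → Fin (m + 1) → Prop)
    (hR : IsMorRel R) (hni : ¬ IsIsoRel R) :
    ∃ (k : ℕ) (d : ℕ → ℕ) (F : ∀ i : ℕ, Fin (d (i + 1) + 1) → Fin (d i + 1) → Prop)
      (h0 : d 0 = m) (h1 : d (k + 1) = n),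
      (∀ i, i ≤ k → IsPrimeRel (F i)) ∧
      ∀ (a : Fin (n + 1)) (c : Fin (m + 1)),
        R a c ↔ chainComp d F (k + 1)
          (Fin.cast (show n + 1 = d (k + 1) + 1 by rw [h1]) a)
          (Fin.cast (show m + 1 = d 0 + 1 by rw [h0]) c) :=
  (isPrimeComposite_of_not_isIsoRel hR hni).isPrimeChain
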